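/- An element r of the algebraic closure ℚ̄ of ℚ is arithmetically fixed if and only if r is rational; that is, (ℚ̄)̃ equals the image of ℚ in ℚ̄. -/

import Mathlib

/-!
A field automorphism is arithmetic on every subset, so an arithmetically fixed element of `ℚ̄` is
fixed by the whole absolute Galois group of `ℚ`, hence rational. Conversely, for `q = a / b` let
`A` consist of the chains `0, q, 2q, …, bq = a` and `0, ±1, ±2, …`: additivity along the integer
chains together with `f 1 = 1` forces `f a = a`, and additivity along the first chain gives
`f a = b * f q`, so `f q = q`.
-/

/-- A map `f` is *arithmetic* on a subset `A` of a field `K`. -/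
def ArithmeticMap {K : Type*} [Field K] (A : Set K) (f : K → K) : Prop :=
  ((1 : K) ∈ A → f 1 = 1) ∧
  (∀ a b : K, a ∈ A → b ∈ A → a + b ∈ A → f (a + b) = f a + f b) ∧
  (∀ a b : K, a ∈ A → b ∈ A → a * b ∈ A → f (a * b) = f a * f b)

/-- An element `r` of a field `K` is *arithmetically fixed* if there is a finite set
`A ⊆ K` with `r ∈ A` such that every arithmetic map `f : A → K` fixes `r`. -/
def ArithFixed {K : Type*} [Field K] (r : K) : Prop :=
  ∃ A : Finset K, r ∈ A ∧ ∀ f : K → K, ArithmeticMap (↑A : Set K) f → f r = r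

namespace ArithmeticMap

variable {K : Type*} [Field K] {A : Set K} {f : K → K}

theorem map_zero (hf : ArithmeticMap A f) (h0 : (0 : K) ∈ A) : f 0 = 0 := by
  simpa using hf.2.1 0 0 h0 h0 (by simpa using h0)

theorem map_natCast_mul (hf : ArithmeticMap A f) {x : K} {n : ℕ}
    (hA : ∀ k ≤ n, (k : K) * x ∈ A) : f (n * x) = n * f x := by
  induction n with
  | zero => simpa using hf.map_zero (by simpa using hA 0 le_rfl)
  | succ n ih =>
    have hsucc : ((n + 1 : ℕ) : K) * x = n * x + x := by push_cast; ring
    have hx : x ∈ A := by simpa using hA 1 (by omega)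
    rw [hsucc, hf.2.1 _ _ (hA n (by omega)) hx (hsucc ▸ hA (n + 1) le_rfl),
      ih fun k hk => hA k (by omega)]
    push_cast
    ring

theorem map_neg_one (hf : ArithmeticMap A f) (h0 : (0 : K) ∈ A) (h1 : (1 : K) ∈ A)
    (hneg : (-1 : K) ∈ A) : f (-1) = -1 := by
  have h := hf.2.1 (-1) 1 hneg h1 (by simpa using h0)
  rw [neg_add_cancel, hf.map_zero h0, hf.1 h1] at h
  linear_combination -h

end ArithmeticMap

theorem RingHom.arithmeticMap {K : Type*} [Field K] (σ : K →+* K) (A : Set K) :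
    ArithmeticMap A σ :=
  ⟨fun _ => map_one σ, fun a b _ _ _ => map_add σ a b, fun a b _ _ _ => map_mul σ a b⟩

theorem ArithFixed.map_eq_self {K : Type*} [Field K] {r : K} (hr : ArithFixed r) (σ : K →+* K) :
    σ r = r :=
  let ⟨_, _, hfix⟩ := hr
  hfix σ (σ.arithmeticMap _)

def natMultiples {K : Type*} [Field K] [DecidableEq K] (x : K) (n : ℕ) : Finset K :=
  (Finset.range (n + 1)).image fun k : ℕ => (k : K) * x

theorem natCast_mul_mem_natMultiples {K : Type*} [Field K] [DecidableEq K] (x : K) {k n : ℕ}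
    (hk : k ≤ n) : (k : K) * x ∈ natMultiples x n :=
  Finset.mem_image_of_mem _ (Finset.mem_range.2 (Nat.lt_succ_of_le hk))

theorem arithFixed_ratCast {K : Type*} [Field K] [CharZero K] (q : ℚ) : ArithFixed (q : K) := by
  classical
  obtain ⟨N, hN⟩ := Int.eq_nat_or_neg q.num
  -- `N + 1` rather than `N`, so that `1 ∈ A` also when `q = 0`
  set A := natMultiples (q : K) q.den ∪ natMultiples 1 (N + 1) ∪ natMultiples (-1) (N + 1)
  have hq : ∀ k ≤ q.den, (k : K) * q ∈ (A : Set K) := fun _ hk =>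
    Finset.mem_union_left _ (Finset.mem_union_left _ (natCast_mul_mem_natMultiples _ hk))
  have hone : ∀ k ≤ N + 1, (k : K) * 1 ∈ (A : Set K) := fun _ hk =>
    Finset.mem_union_left _ (Finset.mem_union_right _ (natCast_mul_mem_natMultiples _ hk))
  have hneg : ∀ k ≤ N + 1, (k : K) * (-1) ∈ (A : Set K) := fun _ hk =>
    Finset.mem_union_right _ (natCast_mul_mem_natMultiples _ hk)
  refine ⟨A, by simpa using hq 1 q.den_pos, fun f hf => ?_⟩
  have hf1 : f 1 = 1 := hf.1 (by simpa using hone 1 (by omega))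
  have hf_neg_one : f (-1) = -1 :=
    hf.map_neg_one (by simpa using hone 0 (by omega)) (by simpa using hone 1 (by omega))
      (by simpa using hneg 1 (by omega))
  have hf_num : f (q.num : K) = q.num := by
    rcases hN with h | h
    · simpa [h, hf1] using hf.map_natCast_mul fun k hk => hone k (by omega : k ≤ N + 1)
    · simpa [h, hf_neg_one] using hf.map_natCast_mul fun k hk => hneg k (by omega : k ≤ N + 1)
  have hden_mul : (q.den : K) * q = q.num := by exact_mod_cast Rat.den_mul_eq_num q
  have hden : (q.den : K) * f q = q.den * q := by
    rw [← hf.map_natCast_mul hq, hden_mul, hf_num]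
  exact mul_left_cancel₀ (by simp) hden

theorem arithFixed_iff_mem_range_algebraMap {K : Type*} [Field K] [CharZero K] [IsGalois ℚ K]
    (r : K) : ArithFixed r ↔ r ∈ Set.range (algebraMap ℚ K) := by
  refine ⟨fun hr => ?_, ?_⟩
  · exact (InfiniteGalois.mem_range_algebraMap_iff_fixed r).2 fun σ => hr.map_eq_self σ.toRingHom
  · rintro ⟨q, rfl⟩
    simpa using arithFixed_ratCast q

/-- An element of the algebraic closure of ℚ is arithmetically fixed iff it is rational. -/
theorem arithFixed_algClosure_iff_rational :
    {r : AlgebraicClosure ℚ | ArithFixed r} =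
      Set.range (algebraMap ℚ (AlgebraicClosure ℚ)) := by
  -- the statement's `algebraMap` comes from `DivisionRing.toRatAlgebra`, not from
  -- `AlgebraicClosure.instAlgebra`; the two agree since `ℚ`-algebra structures are unique
  have : IsAlgClosure ℚ (AlgebraicClosure ℚ) := by
    convert AlgebraicClosure.instIsAlgClosure ℚ
    · rfl
    · exact Subsingleton.elim _ _
  exact Set.ext arithFixed_iff_mem_range_algebraMap
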